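/- For each α ∈ [0, π) the integral F(α) = 2 ∫_0^α ∫_0^∞ ρ (1 + ρ² + 2ρ cos θ)^{-(1+s/2)} dρ dθ is finite, while F(α) → ∞ as α → π⁻. -/

import Mathlib

open MeasureTheory Set Real Filter Topology

/-- `F s α = 2 ∫_0^α ∫_0^∞ ρ (1 + ρ² + 2ρ cos θ)^{-(1+s/2)} dρ dθ`, as an iterated
Lebesgue integral with values in `[0,∞]`. -/
noncomputable def FangL (s α : ℝ) : ENNReal :=
  2 * ∫⁻ θ in Set.Ioo (0 : ℝ) α, ∫⁻ ρ in Set.Ioi (0 : ℝ),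
    ENNReal.ofReal (ρ * (1 + ρ ^ 2 + 2 * ρ * Real.cos θ) ^ (-(1 + s / 2)))


lemma FangAux_meas1 (a p : ℝ) :
    Measurable fun ρ : ℝ => ENNReal.ofReal (ρ * (1 + ρ ^ 2 + 2 * ρ * a) ^ p) :=
  (measurable_id.mul (((measurable_const.add (measurable_id.pow_const 2)).add
    ((measurable_id.const_mul 2).mul_const a)).pow_const p)).ennreal_ofReal

lemma FangAux_meas2 (c p : ℝ) :
    Measurable fun ρ : ℝ => ENNReal.ofReal (c * (ρ * (1 + ρ ^ 2) ^ p)) :=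
  ((measurable_id.mul ((measurable_const.add
    (measurable_id.pow_const 2)).pow_const p)).const_mul c).ennreal_ofReal

lemma FangAux_meas3 : Measurable fun θ : ℝ => (5 * (π - θ))⁻¹ :=
  ((measurable_const.sub measurable_id).const_mul 5).inv

lemma FangAux_K_lt_top (s : ℝ) (hs : s ∈ Set.Ioo (0:ℝ) 1) :
    ∫⁻ ρ in Set.Ioi (0:ℝ), ENNReal.ofReal (ρ * (1 + ρ ^ 2) ^ (-(1 + s/2))) < ⊤ := by
  obtain ⟨hs0, hs1⟩ := hs
  have hsplit : Set.Ioi (0:ℝ) = Set.Ioc 0 1 ∪ Set.Ioi 1 := (Set.Ioc_union_Ioi_eq_Ioi zero_le_one).symm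
  rw [hsplit, lintegral_union measurableSet_Ioi (Set.Ioc_disjoint_Ioi le_rfl)]
  have h1 : ∫⁻ ρ in Set.Ioc (0:ℝ) 1, ENNReal.ofReal (ρ * (1 + ρ ^ 2) ^ (-(1 + s/2))) ≤ 1 := by
    calc ∫⁻ ρ in Set.Ioc (0:ℝ) 1, ENNReal.ofReal (ρ * (1 + ρ ^ 2) ^ (-(1 + s/2)))
        ≤ ∫⁻ _ in Set.Ioc (0:ℝ) 1, 1 := by
          refine setLIntegral_mono measurable_const fun ρ hρ => ?_
          refine ENNReal.ofReal_le_one.2 ?_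
          have h2 : (1 + ρ ^ 2 : ℝ) ^ (-(1 + s/2)) ≤ 1 :=
            Real.rpow_le_one_of_one_le_of_nonpos (by nlinarith [sq_nonneg ρ]) (by linarith)
          nlinarith [Real.rpow_nonneg (by nlinarith [sq_nonneg ρ] : (0:ℝ) ≤ 1 + ρ^2) (-(1+s/2)), hρ.1, hρ.2]
      _ = 1 := by simp [Real.volume_Ioc]
  have h2 : ∫⁻ ρ in Set.Ioi (1:ℝ), ENNReal.ofReal (ρ * (1 + ρ ^ 2) ^ (-(1 + s/2))) < ⊤ := by
    have hint : IntegrableOn (fun ρ : ℝ => ρ ^ (-1 - s)) (Set.Ioi 1) :=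
      integrableOn_Ioi_rpow_of_lt (by linarith) one_pos
    calc ∫⁻ ρ in Set.Ioi (1:ℝ), ENNReal.ofReal (ρ * (1 + ρ ^ 2) ^ (-(1 + s/2)))
        ≤ ∫⁻ ρ in Set.Ioi (1:ℝ), ENNReal.ofReal (ρ ^ (-1 - s)) := by
          refine setLIntegral_mono ((measurable_id.pow_const _).ennreal_ofReal) fun ρ hρ => ?_
          have hρ1 : (1:ℝ) < ρ := hρ
          have hρ0 : (0:ℝ) < ρ := by linarith
          refine ENNReal.ofReal_le_ofReal ?_
          have hb : (1 + ρ ^ 2 : ℝ) ^ (-(1 + s/2)) ≤ (ρ ^ 2 : ℝ) ^ (-(1 + s/2)) :=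
            Real.rpow_le_rpow_of_nonpos (by positivity) (by linarith) (by linarith)
          have he : ((ρ:ℝ) ^ 2 : ℝ) ^ (-(1 + s/2)) = ρ ^ (-2 - s) := by
            rw [← Real.rpow_natCast ρ 2, ← Real.rpow_mul hρ0.le]
            norm_num; ring_nf
          calc ρ * (1 + ρ ^ 2 : ℝ) ^ (-(1 + s/2)) ≤ ρ * (ρ ^ 2 : ℝ) ^ (-(1 + s/2)) := by
                exact mul_le_mul_of_nonneg_left hb hρ0.le
            _ = ρ ^ (-1 - s) := by
                rw [he, show (-1-s) = 1 + (-2-s) by ring, Real.rpow_add hρ0, Real.rpow_one]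
      _ < ⊤ := hint.setLIntegral_lt_top
  exact lt_of_le_of_lt (add_le_add h1 le_rfl) (ENNReal.add_lt_top.2 ⟨by norm_num, h2⟩)

/-- Lower bound for the inner integral near `θ = π`. -/
lemma FangAux_inner_ge (s : ℝ) (hs : s ∈ Set.Ioo (0:ℝ) 1) {θ : ℝ}
    (hθ : θ ∈ Set.Ioo (π - 1/3) π) :
    ENNReal.ofReal ((5 * (π - θ))⁻¹) ≤
      ∫⁻ ρ in Set.Ioi (0:ℝ),
        ENNReal.ofReal (ρ * (1 + ρ ^ 2 + 2 * ρ * Real.cos θ) ^ (-(1 + s / 2))) := by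
  obtain ⟨hs0, hs1⟩ := hs
  set t : ℝ := π - θ with ht_def
  have ht0 : 0 < t := by simp [ht_def]; linarith [hθ.2]
  have ht3 : t < 1/3 := by simp [ht_def]; linarith [hθ.1]
  have hθeq : θ = π - t := by rw [ht_def]; ring
  have hcosθ : Real.cos θ = -Real.cos t := by
    conv_lhs => rw [hθeq, Real.cos_pi_sub]
  have key : ∀ ρ ∈ Set.Ioo (1:ℝ) (1 + t),
      (5 * t ^ 2)⁻¹ ≤ ρ * (1 + ρ ^ 2 + 2 * ρ * Real.cos θ) ^ (-(1 + s / 2)) := by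
    intro ρ hρ
    obtain ⟨hρ1, hρ2⟩ := hρ
    have hc1 : Real.cos t ≤ 1 := Real.cos_le_one t
    have hc2 : 1 - t ^ 2 / 2 ≤ Real.cos t := Real.one_sub_sq_div_two_le_cos
    have hbpos : 0 < 1 + ρ ^ 2 + 2 * ρ * Real.cos θ := by
      rw [hcosθ]; nlinarith [sq_nonneg (ρ - 1)]
    have hble : 1 + ρ ^ 2 + 2 * ρ * Real.cos θ ≤ 5 * t ^ 2 := by
      rw [hcosθ]; nlinarith [sq_nonneg (ρ - 1), sq_nonneg t]
    have h5t : 0 < 5 * t ^ 2 := by positivity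
    have h5t1 : 5 * t ^ 2 ≤ 1 := by nlinarith
    have hr1 : (5 * t ^ 2 : ℝ) ^ (-(1 + s / 2)) ≤ (1 + ρ ^ 2 + 2 * ρ * Real.cos θ) ^ (-(1 + s / 2)) :=
      Real.rpow_le_rpow_of_nonpos hbpos hble (by linarith)
    have hr2 : (5 * t ^ 2 : ℝ)⁻¹ ≤ (5 * t ^ 2 : ℝ) ^ (-(1 + s / 2)) := by
      rw [← Real.rpow_neg_one]
      exact Real.rpow_le_rpow_of_exponent_ge h5t h5t1 (by linarith)
    calc (5 * t ^ 2 : ℝ)⁻¹ ≤ (5 * t ^ 2 : ℝ) ^ (-(1 + s / 2)) := hr2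
      _ ≤ (1 + ρ ^ 2 + 2 * ρ * Real.cos θ) ^ (-(1 + s / 2)) := hr1
      _ ≤ ρ * (1 + ρ ^ 2 + 2 * ρ * Real.cos θ) ^ (-(1 + s / 2)) := by
          nlinarith [Real.rpow_nonneg hbpos.le (-(1 + s / 2))]
  calc ENNReal.ofReal ((5 * (π - θ))⁻¹)
      = ∫⁻ _ in Set.Ioo (1:ℝ) (1 + t), ENNReal.ofReal ((5 * t ^ 2)⁻¹) := by
        rw [setLIntegral_const, Real.volume_Ioo, ← ENNReal.ofReal_mul (by positivity)]
        congr 1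
        rw [show (1 + t - 1 : ℝ) = t by ring]
        rw [← ht_def]
        field_simp
    _ ≤ ∫⁻ ρ in Set.Ioo (1:ℝ) (1 + t),
          ENNReal.ofReal (ρ * (1 + ρ ^ 2 + 2 * ρ * Real.cos θ) ^ (-(1 + s / 2))) := by
        refine setLIntegral_mono (FangAux_meas1 (Real.cos θ) _) fun ρ hρ => ENNReal.ofReal_le_ofReal (key ρ hρ)
    _ ≤ ∫⁻ ρ in Set.Ioi (0:ℝ),
          ENNReal.ofReal (ρ * (1 + ρ ^ 2 + 2 * ρ * Real.cos θ) ^ (-(1 + s / 2))) := by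
        refine lintegral_mono_set fun x hx => ?_
        exact lt_trans one_pos hx.1

/-- The lower-bound density is non-integrable on `Ioo (π - 1/3) π`. -/
lemma FangAux_lower_top :
    ∫⁻ θ in Set.Ioo (π - 1/3) π, ENNReal.ofReal ((5 * (π - θ))⁻¹) = ⊤ := by
  by_contra hne
  have hfin : ∫⁻ θ in Set.Ioo (π - 1/3) π, ENNReal.ofReal ((5 * (π - θ))⁻¹) < ⊤ :=
    lt_top_iff_ne_top.2 hne
  have hmeas : AEStronglyMeasurable (fun θ : ℝ => (5 * (π - θ))⁻¹)
      (volume.restrict (Set.Ioo (π - 1/3) π)) :=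
    FangAux_meas3.aestronglyMeasurable
  have hnonneg : 0 ≤ᵐ[volume.restrict (Set.Ioo (π - 1/3) π)] fun θ : ℝ => (5 * (π - θ))⁻¹ := by
    refine (ae_restrict_iff' measurableSet_Ioo).2 (ae_of_all _ fun θ hθ => ?_)
    have : 0 < π - θ := by linarith [hθ.2]
    positivity
  have hInt : IntegrableOn (fun θ : ℝ => (5 * (π - θ))⁻¹) (Set.Ioo (π - 1/3) π) := by
    refine ⟨hmeas, ?_⟩
    rw [hasFiniteIntegral_iff_ofReal hnonneg]
    exact hfin
  have hInt2 : IntegrableOn (fun θ : ℝ => (θ - π)⁻¹) (Set.Ioo (π - 1/3) π) := by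
    have hfun : (fun θ : ℝ => (θ - π)⁻¹) = fun θ : ℝ => -(5 * (5 * (π - θ))⁻¹) := by
      funext θ
      rw [show θ - π = -(π - θ) by ring, inv_neg, mul_inv]
      ring
    rw [hfun]
    exact (hInt.const_mul 5).neg
  have hII : IntervalIntegrable (fun θ : ℝ => (θ - π)⁻¹) volume (π - 1/3) π := by
    rw [intervalIntegrable_iff_integrableOn_Ioo_of_le (by linarith [Real.pi_pos])]
    exact hInt2
  rw [intervalIntegrable_sub_inv_iff] at hII
  rcases hII with h | h
  · linarith
  · exact h (right_mem_uIcc)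

/-- `F(α)` is finite for `α ∈ [0,π)`, while `F(α) → ∞` as `α → π⁻`. -/
theorem FangL_finite_and_tendsto_top (s : ℝ) (hs : s ∈ Set.Ioo (0 : ℝ) 1) :
    (∀ α ∈ Set.Ico (0 : ℝ) π, FangL s α < ⊤) ∧
    Tendsto (FangL s) (𝓝[<] π) (𝓝 ⊤) := by
  obtain ⟨hs0, hs1⟩ := hs
  constructor
  · -- finiteness
    rintro α ⟨hα0, hαπ⟩
    have hcos : -1 < Real.cos α := by
      have h := Real.cos_lt_cos_of_nonneg_of_le_pi hα0 le_rfl hαπ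
      rwa [Real.cos_pi] at h
    set ε : ℝ := min 1 (1 + Real.cos α) with hε_def
    have hε0 : 0 < ε := lt_min one_pos (by linarith)
    have hε1 : ε ≤ 1 := min_le_left _ _
    have hε2 : ε ≤ 1 + Real.cos α := min_le_right _ _
    set C : ENNReal := ENNReal.ofReal (ε ^ (-(1 + s/2))) *
      ∫⁻ ρ in Set.Ioi (0:ℝ), ENNReal.ofReal (ρ * (1 + ρ ^ 2) ^ (-(1 + s/2))) with hC_def
    have hC_lt : C < ⊤ :=
      ENNReal.mul_lt_top ENNReal.ofReal_lt_top (FangAux_K_lt_top s ⟨hs0, hs1⟩)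
    have hinner : ∀ θ ∈ Set.Ioo (0:ℝ) α,
        (∫⁻ ρ in Set.Ioi (0:ℝ),
          ENNReal.ofReal (ρ * (1 + ρ ^ 2 + 2 * ρ * Real.cos θ) ^ (-(1 + s / 2)))) ≤ C := by
      intro θ hθ
      have hcθ : Real.cos α ≤ Real.cos θ :=
        Real.cos_le_cos_of_nonneg_of_le_pi (le_of_lt hθ.1) (le_of_lt hαπ) (le_of_lt hθ.2)
      have hpt : ∀ ρ ∈ Set.Ioi (0:ℝ),
          ENNReal.ofReal (ρ * (1 + ρ ^ 2 + 2 * ρ * Real.cos θ) ^ (-(1 + s / 2))) ≤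
          ENNReal.ofReal (ε ^ (-(1 + s/2)) * (ρ * (1 + ρ ^ 2) ^ (-(1 + s/2)))) := by
        intro ρ hρ
        have hρ0 : (0:ℝ) < ρ := hρ
        refine ENNReal.ofReal_le_ofReal ?_
        have hbase : ε * (1 + ρ ^ 2) ≤ 1 + ρ ^ 2 + 2 * ρ * Real.cos θ := by
          nlinarith [mul_nonneg (sub_nonneg.2 hε1) (sq_nonneg (1 - ρ)),
            mul_nonneg hρ0.le (show (0:ℝ) ≤ 1 - ε + Real.cos θ by linarith)]
        have hbpos : (0:ℝ) < ε * (1 + ρ ^ 2) := by positivity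
        have hr : (1 + ρ ^ 2 + 2 * ρ * Real.cos θ) ^ (-(1 + s / 2)) ≤
            (ε * (1 + ρ ^ 2)) ^ (-(1 + s/2)) :=
          Real.rpow_le_rpow_of_nonpos hbpos hbase (by linarith)
        have hmul : ((ε * (1 + ρ ^ 2)) : ℝ) ^ (-(1 + s/2)) =
            ε ^ (-(1 + s/2)) * (1 + ρ ^ 2) ^ (-(1 + s/2)) :=
          Real.mul_rpow hε0.le (by positivity)
        calc ρ * (1 + ρ ^ 2 + 2 * ρ * Real.cos θ) ^ (-(1 + s / 2))
            ≤ ρ * (ε * (1 + ρ ^ 2)) ^ (-(1 + s/2)) := mul_le_mul_of_nonneg_left hr hρ0.le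
          _ = ε ^ (-(1 + s/2)) * (ρ * (1 + ρ ^ 2) ^ (-(1 + s/2))) := by rw [hmul]; ring
      calc (∫⁻ ρ in Set.Ioi (0:ℝ),
            ENNReal.ofReal (ρ * (1 + ρ ^ 2 + 2 * ρ * Real.cos θ) ^ (-(1 + s / 2))))
          ≤ ∫⁻ ρ in Set.Ioi (0:ℝ),
            ENNReal.ofReal (ε ^ (-(1 + s/2)) * (ρ * (1 + ρ ^ 2) ^ (-(1 + s/2)))) :=
            setLIntegral_mono (FangAux_meas2 _ _) hpt
        _ = C := by
            rw [hC_def]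
            have : ∀ ρ : ℝ, ENNReal.ofReal (ε ^ (-(1 + s/2)) * (ρ * (1 + ρ ^ 2) ^ (-(1 + s/2)))) =
                ENNReal.ofReal (ε ^ (-(1 + s/2))) *
                  ENNReal.ofReal (ρ * (1 + ρ ^ 2) ^ (-(1 + s/2))) := fun ρ =>
              ENNReal.ofReal_mul (Real.rpow_nonneg hε0.le _)
            simp_rw [this]
            exact lintegral_const_mul' _ _ ENNReal.ofReal_ne_top
    have hF : FangL s α ≤ 2 * (C * volume (Set.Ioo (0:ℝ) α)) := by
      unfold FangL
      gcongr
      calc (∫⁻ θ in Set.Ioo (0:ℝ) α, ∫⁻ ρ in Set.Ioi (0:ℝ),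
            ENNReal.ofReal (ρ * (1 + ρ ^ 2 + 2 * ρ * Real.cos θ) ^ (-(1 + s / 2))))
          ≤ ∫⁻ _ in Set.Ioo (0:ℝ) α, C := setLIntegral_mono measurable_const hinner
        _ = C * volume (Set.Ioo (0:ℝ) α) := setLIntegral_const _ _
    refine lt_of_le_of_lt hF ?_
    refine ENNReal.mul_lt_top (by norm_num) (ENNReal.mul_lt_top hC_lt ?_)
    rw [Real.volume_Ioo]
    exact ENNReal.ofReal_lt_top
  · -- divergence
    set c : ℝ := π - 1/3 with hc_def
    set h : ℝ → ENNReal := (Set.Ioo c π).indicator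
      (fun θ => ENNReal.ofReal ((5 * (π - θ))⁻¹)) with hh_def
    have hh_meas : Measurable h :=
      Measurable.indicator FangAux_meas3.ennreal_ofReal measurableSet_Ioo
    have hh_le : ∀ θ, h θ ≤ ∫⁻ ρ in Set.Ioi (0:ℝ),
        ENNReal.ofReal (ρ * (1 + ρ ^ 2 + 2 * ρ * Real.cos θ) ^ (-(1 + s / 2))) := by
      intro θ
      by_cases hθ : θ ∈ Set.Ioo c π
      · rw [hh_def, Set.indicator_of_mem hθ]
        exact FangAux_inner_ge s ⟨hs0, hs1⟩ hθ
      · rw [hh_def, Set.indicator_of_notMem hθ]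
        exact zero_le
    set ν : Measure ℝ := volume.withDensity h with hν_def
    have hν_apply : ∀ {t : Set ℝ}, MeasurableSet t → ν t = ∫⁻ θ in t, h θ := by
      intro t ht
      rw [hν_def, withDensity_apply h ht]
    have hν_top : ν (Set.Ioo c π) = ⊤ := by
      rw [hν_apply measurableSet_Ioo]
      rw [← FangAux_lower_top]
      refine setLIntegral_congr_fun measurableSet_Ioo (fun θ hθ => ?_)
      rw [hh_def, Set.indicator_of_mem hθ]
    -- sequence approaching π
    set u : ℕ → ℝ := fun k => π - (1/3) / (k + 1) with hu_def
    have hu_lt : ∀ k, u k < π := by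
      intro k
      rw [hu_def]
      have : (0:ℝ) < (1/3) / (k + 1) := by positivity
      linarith
    have hu_mono : Monotone fun k => Set.Ioo c (u k) := by
      intro i j hij
      refine Set.Ioo_subset_Ioo le_rfl ?_
      rw [hu_def]
      simp only
      have hij' : (i:ℝ) + 1 ≤ (j:ℝ) + 1 := by exact_mod_cast by omega
      have h1 : (0:ℝ) < (i:ℝ) + 1 := by positivity
      have := div_le_div_of_nonneg_left (by norm_num : (0:ℝ) ≤ 1/3) h1 hij'
      linarith [div_le_div_of_nonneg_left (by norm_num : (0:ℝ) ≤ 1/3) h1 hij']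
    have hu_union : (⋃ k, Set.Ioo c (u k)) = Set.Ioo c π := by
      apply Set.Subset.antisymm
      · refine Set.iUnion_subset fun k => Set.Ioo_subset_Ioo le_rfl (hu_lt k).le
      · intro x hx
        obtain ⟨hx1, hx2⟩ := hx
        obtain ⟨k, hk⟩ := exists_nat_gt ((1/3) / (π - x))
        refine Set.mem_iUnion.2 ⟨k, hx1, ?_⟩
        rw [hu_def]
        have hπx : 0 < π - x := by linarith
        have hk' : (1/3) / (π - x) < k + 1 := by
          have : (k:ℝ) ≤ k + 1 := by linarith
          linarith
        have hk0 : (0:ℝ) < (k:ℝ) + 1 := by positivity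
        have hh : (1/3 : ℝ) < ((k:ℝ) + 1) * (π - x) := by
          rw [div_lt_iff₀ hπx] at hk'
          linarith
        have : (1/3) / ((k:ℝ) + 1) < π - x := by
          rw [div_lt_iff₀ hk0]
          nlinarith
        linarith
    have htend : Tendsto (fun k => ν (Set.Ioo c (u k))) atTop (𝓝 (ν (Set.Ioo c π))) := by
      rw [← hu_union]
      exact tendsto_measure_iUnion_atTop hu_mono
    rw [hν_top] at htend
    rw [ENNReal.tendsto_nhds_top_iff_nat]
    intro n
    have hev : ∀ᶠ k in atTop, (n : ENNReal) < ν (Set.Ioo c (u k)) :=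
      htend.eventually (eventually_gt_nhds (by exact ENNReal.natCast_lt_top n))
    obtain ⟨k, hk⟩ := hev.exists
    filter_upwards [Ioo_mem_nhdsLT (hu_lt k)] with α hα
    refine lt_of_lt_of_le hk ?_
    calc ν (Set.Ioo c (u k)) ≤ ν (Set.Ioo c α) := by
          refine measure_mono (Set.Ioo_subset_Ioo le_rfl hα.1.le)
      _ = ∫⁻ θ in Set.Ioo c α, h θ := hν_apply measurableSet_Ioo
      _ ≤ ∫⁻ θ in Set.Ioo c α, ∫⁻ ρ in Set.Ioi (0:ℝ),
            ENNReal.ofReal (ρ * (1 + ρ ^ 2 + 2 * ρ * Real.cos θ) ^ (-(1 + s / 2))) :=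
          lintegral_mono hh_le
      _ ≤ ∫⁻ θ in Set.Ioo (0:ℝ) α, ∫⁻ ρ in Set.Ioi (0:ℝ),
            ENNReal.ofReal (ρ * (1 + ρ ^ 2 + 2 * ρ * Real.cos θ) ^ (-(1 + s / 2))) := by
          refine lintegral_mono_set (Set.Ioo_subset_Ioo ?_ le_rfl)
          rw [hc_def]
          linarith [Real.pi_gt_three]
      _ ≤ FangL s α := by
          unfold FangL
          exact le_mul_of_one_le_left zero_le one_le_two
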